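/- arXiv:1807.02553 — 3 statements merged into one kernel-verified Lean document; each statement's English description precedes it below -/
import Mathlib

section
/- Let J be a finite set of jobs, m ≥ 1 a natural number, and for each j ∈ J let r_j ∈ ℕ be a release time, p'_j ∈ ℕ with p'_j > 0 a processing amount, and C_j ∈ ℕ a time. Let x : J → ℕ → ℝ satisfy: 0 ≤ x(j,t) ≤ 1 for all j,t; x(j,t) = 0 whenever t < r_j; Σ_{j ∈ J} x(j,t) ≤ m for every t ∈ ℕ; and Σ_{t < C_j} x(j,t) ≥ p'_j for every j ∈ J. Then for all natural numbers a ≤ b: Σ_{j : C_j ≤ b and r_j + p'_j > a} min{ p'_j, r_j + p'_j − a } ≤ 2·m·(b − a). -/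
/-!
Each job is processed at rate at most one and not before its release, so by time `a` at most
`a - r j` of its `p' j` units are done; a job finishing by `b` must therefore receive at least
`min (p' j) (r j + p' j - a)` units inside `[a, b)`. Summing over jobs and exchanging the sums,
this is at most the capacity `m (b - a)` of the window, already half the claimed bound.
-/

open Finset

theorem sum_range_le_tsub_of_le_one {f : ℕ → ℝ} {r : ℕ} (hle : ∀ t, f t ≤ 1)
    (hzero : ∀ t, t < r → f t = 0) (a : ℕ) :
    ∑ t ∈ range a, f t ≤ ((a - r : ℕ) : ℝ) := by
  have hsub : Ico r a ⊆ range a := fun t ht => mem_range.2 (mem_Ico.1 ht).2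
  have hvanish : ∀ t ∈ range a, t ∉ Ico r a → f t = 0 := fun t ht hnot =>
    hzero t (by simp only [mem_Ico, mem_range] at ht hnot; omega)
  calc ∑ t ∈ range a, f t = ∑ t ∈ Ico r a, f t := (sum_subset hsub hvanish).symm
    _ ≤ #(Ico r a) • (1 : ℝ) := sum_le_card_nsmul _ _ _ fun t _ => hle t
    _ = ((a - r : ℕ) : ℝ) := by simp

theorem min_le_sum_Ico_of_le_sum_range {f : ℕ → ℝ} {r p C a b : ℕ}
    (hnonneg : ∀ t, 0 ≤ f t) (hle : ∀ t, f t ≤ 1) (hzero : ∀ t, t < r → f t = 0)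
    (hdone : (p : ℝ) ≤ ∑ t ∈ range C, f t) (hC : C ≤ b) (hab : a ≤ b) :
    min (p : ℝ) ((r : ℝ) + p - a) ≤ ∑ t ∈ Ico a b, f t := by
  have hbefore_b : (p : ℝ) ≤ ∑ t ∈ range b, f t :=
    hdone.trans (sum_le_sum_of_subset_of_nonneg (range_subset_range.2 hC)
      fun t _ _ => hnonneg t)
  have hbefore_a := sum_range_le_tsub_of_le_one hle hzero a
  have hmin : min (p : ℝ) ((r : ℝ) + p - a) ≤ p - ((a - r : ℕ) : ℝ) := by
    rcases le_total a r with h | h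
    · simp [Nat.sub_eq_zero_of_le h]
    · rw [Nat.cast_sub h]
      linarith [min_le_right (p : ℝ) ((r : ℝ) + p - a)]
  rw [sum_Ico_eq_sub _ hab]
  linarith

theorem stmt_3_general (J : Type) [Fintype J] (m : ℕ)
    (r p' C : J → ℕ)
    (x : J → ℕ → ℝ)
    (hx01 : ∀ j t, 0 ≤ x j t ∧ x j t ≤ 1)
    (hx_rel : ∀ j t, t < r j → x j t = 0)
    (hx_cap : ∀ t : ℕ, ∑ j : J, x j t ≤ (m : ℝ))
    (hx_done : ∀ j : J, ∑ t ∈ Finset.range (C j), x j t ≥ (p' j : ℝ)) :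
    ∀ a b : ℕ, a ≤ b →
      ∑ j ∈ Finset.univ.filter (fun j : J => C j ≤ b ∧ a < r j + p' j),
          min ((p' j : ℝ)) ((r j : ℝ) + (p' j : ℝ) - (a : ℝ))
        ≤ 2 * (m : ℝ) * ((b : ℝ) - (a : ℝ)) := by
  intro a b hab
  have hwindow : 0 ≤ (b : ℝ) - a := sub_nonneg.2 (Nat.cast_le.2 hab)
  calc ∑ j ∈ univ.filter (fun j : J => C j ≤ b ∧ a < r j + p' j),
          min ((p' j : ℝ)) ((r j : ℝ) + (p' j : ℝ) - (a : ℝ))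
      ≤ ∑ j ∈ univ.filter (fun j : J => C j ≤ b ∧ a < r j + p' j), ∑ t ∈ Ico a b, x j t :=
        sum_le_sum fun j hj => min_le_sum_Ico_of_le_sum_range (fun t => (hx01 j t).1)
          (fun t => (hx01 j t).2) (hx_rel j) (hx_done j) (mem_filter.1 hj).2.1 hab
    _ ≤ ∑ j, ∑ t ∈ Ico a b, x j t :=
        sum_le_sum_of_subset_of_nonneg (filter_subset _ _)
          fun j _ _ => sum_nonneg fun t _ => (hx01 j t).1
    _ = ∑ t ∈ Ico a b, ∑ j, x j t := sum_comm
    _ ≤ #(Ico a b) • (m : ℝ) := sum_le_card_nsmul _ _ _ fun t _ => hx_cap t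
    _ = m * ((b : ℝ) - a) := by simp [Nat.cast_sub hab, mul_comm]
    _ ≤ 2 * m * ((b : ℝ) - a) := by nlinarith [mul_nonneg (Nat.cast_nonneg m) hwindow]

/-- Lemma 3.2 (with machine capacity `m` explicit): for a fractional LP solution `x`
processing each job at rate at most 1, only after its release time, with total rate at
most `m`, and processing at least `p' j` units of job `j` before `C j`, the total
truncated volume of jobs completing by `b` whose release-plus-size extends past `a`
is at most `2 * m * (b - a)`. -/
theorem stmt_3 (J : Type) [Fintype J] (m : ℕ) (hm : 1 ≤ m)
    (r p' C : J → ℕ) (hp' : ∀ j, 0 < p' j)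
    (x : J → ℕ → ℝ)
    (hx01 : ∀ j t, 0 ≤ x j t ∧ x j t ≤ 1)
    (hx_rel : ∀ j t, t < r j → x j t = 0)
    (hx_cap : ∀ t : ℕ, ∑ j : J, x j t ≤ (m : ℝ))
    (hx_done : ∀ j : J, ∑ t ∈ Finset.range (C j), x j t ≥ (p' j : ℝ)) :
    ∀ a b : ℕ, a ≤ b →
      ∑ j ∈ Finset.univ.filter (fun j : J => C j ≤ b ∧ a < r j + p' j),
          min ((p' j : ℝ)) ((r j : ℝ) + (p' j : ℝ) - (a : ℝ))
        ≤ 2 * (m : ℝ) * ((b : ℝ) - (a : ℝ)) :=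
  stmt_3_general J m r p' C x hx01 hx_rel hx_cap hx_done
end

section
/- Let G be a finite simple graph, let α ≥ 1 be a real number, let k ≥ 2 be a natural number, and let S be a finite set of vertices of G with 2 ≤ |S| ≤ α·k and k ≤ |S|, such that e(S) ≥ L for some real L ≥ 0. Then there exists a subset T ⊆ S with |T| = k and e(T) ≥ L/(2α²). -/
open Classical in
/-- `edgesIn G S` is the number of edges of `G` with both endpoints in `S`. -/
noncomputable def edgesIn {V : Type} [Fintype V] [DecidableEq V]
    (G : SimpleGraph V) [DecidableRel G.Adj] (S : Finset V) : ℕ :=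
  (G.edgeFinset.filter (fun e => ∀ v ∈ e, v ∈ S)).card

/-! Average `e(T)` over the `k`-subsets `T` of `S`, with `n = |S|`: each edge of `S` lies in
`C(n-2, k-2)` of the `C(n, k)` subsets, so some `T` has `e(T) ≥ e(S)·C(k,2)/C(n,2)`, and
`C(n,2) ≤ n²/2 ≤ α²k²/2 ≤ 2α²·C(k,2)` because `k ≥ 2`. -/

open Finset

section DoubleCounting

variable {V : Type} [Fintype V] [DecidableEq V] (G : SimpleGraph V) [DecidableRel G.Adj]

theorem edgesIn_eq_card_filter_toFinset_subset (S : Finset V) :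
    edgesIn G S = #{e ∈ G.edgeFinset | e.toFinset ⊆ S} := by
  simp only [edgesIn, subset_iff, Sym2.mem_toFinset]

theorem edgesIn_eq_card_filter_of_subset {S T : Finset V} (hTS : T ⊆ S) :
    edgesIn G T = #{e ∈ {e ∈ G.edgeFinset | e.toFinset ⊆ S} | e.toFinset ⊆ T} := by
  rw [edgesIn_eq_card_filter_toFinset_subset, filter_filter]
  exact congrArg card (filter_congr fun e _ => ⟨fun h => ⟨h.trans hTS, h⟩, And.right⟩)

theorem sum_edgesIn_powersetCard (S : Finset V) {k : ℕ} (hk : 2 ≤ k) :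
    ∑ T ∈ S.powersetCard k, edgesIn G T = edgesIn G S * (#S - 2).choose (k - 2) := by
  set E := {e ∈ G.edgeFinset | e.toFinset ⊆ S}
  have h := sum_card_bipartiteAbove_eq_sum_card_bipartiteBelow (s := S.powersetCard k) (t := E)
    (r := fun T e => e.toFinset ⊆ T)
  have hbelow : ∀ e ∈ E, #((S.powersetCard k).bipartiteBelow (fun T e => e.toFinset ⊆ T) e)
      = (#S - 2).choose (k - 2) := by
    intro e he
    obtain ⟨he, heS⟩ := mem_filter.mp he
    have hcard : #e.toFinset = 2 :=
      Sym2.card_toFinset_of_not_isDiag e (G.not_isDiag_of_mem_edgeSet (G.mem_edgeFinset.mp he))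
    rw [bipartiteBelow, card_filter_powersetCard_subset _ _ _ heS (hcard ▸ hk), hcard]
  rw [sum_congr rfl hbelow, sum_const, smul_eq_mul, ← edgesIn_eq_card_filter_toFinset_subset] at h
  rw [← h]
  exact sum_congr rfl fun T hT =>
    edgesIn_eq_card_filter_of_subset G (mem_powersetCard.mp hT).1

theorem exists_subset_card_eq_edgesIn_mul_choose_two_le (S : Finset V) {k : ℕ} (hk : 2 ≤ k)
    (hkS : k ≤ #S) :
    ∃ T ⊆ S, #T = k ∧ edgesIn G S * k.choose 2 ≤ edgesIn G T * (#S).choose 2 := by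
  obtain ⟨T, hT, hle⟩ := exists_le_of_sum_le (powersetCard_nonempty.mpr hkS)
    (f := fun _ => edgesIn G S * (#S - 2).choose (k - 2))
    (g := fun T => edgesIn G T * (#S).choose k) (by
      rw [sum_const, ← sum_mul, sum_edgesIn_powersetCard G S hk, card_powersetCard, smul_eq_mul,
        mul_comm])
  refine ⟨T, (mem_powersetCard.mp hT).1, (mem_powersetCard.mp hT).2, ?_⟩
  have hpos : 0 < (#S).choose k := Nat.choose_pos hkS
  -- `C(n,k)·C(k,2) = C(n,2)·C(n-2,k-2)`
  have hid := Nat.choose_mul (n := #S) hk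
  refine le_of_mul_le_mul_right ?_ hpos
  calc edgesIn G S * k.choose 2 * (#S).choose k
      = edgesIn G S * (#S - 2).choose (k - 2) * (#S).choose 2 := by
        rw [mul_assoc, mul_comm (k.choose 2), hid]; ring
    _ ≤ edgesIn G T * (#S).choose k * (#S).choose 2 := Nat.mul_le_mul_right _ hle
    _ = edgesIn G T * (#S).choose 2 * (#S).choose k := by ring

end DoubleCounting

theorem choose_two_le_two_mul_sq_mul_choose_two {n k : ℕ} {α : ℝ} (hk : 2 ≤ k)
    (hn : (n : ℝ) ≤ α * k) : (n.choose 2 : ℝ) ≤ 2 * α ^ 2 * k.choose 2 := by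
  have hk' : (2 : ℝ) ≤ k := by exact_mod_cast hk
  rw [Nat.cast_choose_two, Nat.cast_choose_two]
  calc (n : ℝ) * (n - 1) / 2 ≤ (α * k) ^ 2 / 2 := by
        gcongr; nlinarith [pow_le_pow_left₀ (Nat.cast_nonneg n) hn 2]
    _ ≤ 2 * α ^ 2 * (k * (k - 1) / 2) := by nlinarith [sq_nonneg α]

theorem stmt_8_general {V : Type} [Fintype V] [DecidableEq V]
    (G : SimpleGraph V) [DecidableRel G.Adj]
    (α : ℝ) (k : ℕ) (hk : 2 ≤ k)
    (S : Finset V) (hSαk : (S.card : ℝ) ≤ α * k) (hkS : k ≤ S.card)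
    (L : ℝ) (hL : L ≤ (edgesIn G S : ℝ)) :
    ∃ T ⊆ S, T.card = k ∧ L / (2 * α ^ 2) ≤ (edgesIn G T : ℝ) := by
  obtain ⟨T, hTS, hTk, hT⟩ := exists_subset_card_eq_edgesIn_mul_choose_two_le G S hk hkS
  refine ⟨T, hTS, hTk, div_le_of_le_mul₀ (by positivity) (Nat.cast_nonneg _) ?_⟩
  have hk2 : (0 : ℝ) < k.choose 2 := by exact_mod_cast Nat.choose_pos hk
  have hST : (edgesIn G S : ℝ) * k.choose 2 ≤ edgesIn G T * (2 * α ^ 2) * k.choose 2 :=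
    calc (edgesIn G S : ℝ) * k.choose 2 ≤ edgesIn G T * (#S).choose 2 := by exact_mod_cast hT
      _ ≤ edgesIn G T * (2 * α ^ 2 * k.choose 2) := by
        gcongr; exact choose_two_le_two_mul_sq_mul_choose_two hk hSαk
      _ = edgesIn G T * (2 * α ^ 2) * k.choose 2 := by ring
  exact hL.trans (le_of_mul_le_mul_right hST hk2)

/-- From a set `S` of at most `α·k` vertices (and at least `k ≥ 2` of them) spanning
at least `L` edges, one can extract a `k`-vertex subset spanning at least `L/(2α²)`
edges. -/
theorem stmt_8 {V : Type} [Fintype V] [DecidableEq V]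
    (G : SimpleGraph V) [DecidableRel G.Adj]
    (α : ℝ) (hα : 1 ≤ α) (k : ℕ) (hk : 2 ≤ k)
    (S : Finset V) (hS2 : 2 ≤ S.card) (hSαk : (S.card : ℝ) ≤ α * k) (hkS : k ≤ S.card)
    (L : ℝ) (hL0 : 0 ≤ L) (hL : L ≤ (edgesIn G S : ℝ)) :
    ∃ T ⊆ S, T.card = k ∧ L / (2 * α ^ 2) ≤ (edgesIn G T : ℝ) :=
  stmt_8_general G α k hk S hSαk hkS L hL
end

section
/- Let m ≥ 1 be a natural number. For each i ∈ {1,…,m}, let P_i be a finite set of points in ℝ², where each p ∈ P_i has coordinates (x_p, y_p) and a demand d_p > 0. Let R be a finite set of axis-parallel rectangles, where each r ∈ R is the region [0, x_r] × [y¹_r, y²_r] and has, for each i, a capacity c(i,r) > 0. For p ∈ P_i define the 4-dimensional point φ(i,p) = (2i + 1/2, x_p, y_p, d_p) ∈ ℝ⁴, and for r ∈ R define the hyper-4cuboid v_r = ⋃_{i=1}^m [2i, 2i+1] × [0, x_r] × [y¹_r, y²_r] × [0, c(i,r)] ⊆ ℝ⁴. Then for every subset S ⊆ R the following are equivalent: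 (a) for every i and every p ∈ P_i there exists r ∈ S such that (x_p, y_p) ∈ [0, x_r] × [y¹_r, y²_r] and c(i,r) ≥ d_p; (b) for every i and every p ∈ P_i, the point φ(i,p) lies in ⋃_{r ∈ S} v_r. -/
/-!
The slabs `[2i, 2i+1]` for distinct naturals `i` are disjoint and `2j + 1/2` lies only in the
`j`-th one, so the first coordinate of `φ(j,p)` selects the `j`-th component of every `v_r`.
There membership of the last coordinate in `[0, c(j,r)]` is exactly `d_p ≤ c(j,r)`, because
demands are positive.
-/

open Set

theorem two_mul_add_half_mem_Icc_two_mul_iff {i j : ℕ} :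
    2 * (j : ℝ) + 1 / 2 ∈ Icc (2 * (i : ℝ)) (2 * i + 1) ↔ i = j := by
  refine ⟨fun ⟨hle, hge⟩ => ?_, fun hij => ?_⟩
  · have hij : (i : ℝ) < j + 1 := by linarith
    have hji : (j : ℝ) < i + 1 := by linarith
    norm_cast at hij hji
    omega
  · subst hij
    constructor <;> linarith

theorem mk_mem_iUnion_Icc_two_mul_prod_iff {β : Type*} {m : ℕ} (s : Fin m → Set β)
    (j : Fin m) (b : β) :
    (2 * ((j : ℕ) : ℝ) + 1 / 2, b) ∈ ⋃ i : Fin m,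
      Icc (2 * ((i : ℕ) : ℝ)) (2 * ((i : ℕ) : ℝ) + 1) ×ˢ s i ↔ b ∈ s j := by
  simp only [mem_iUnion, mem_prod, two_mul_add_half_mem_Icc_two_mul_iff, Fin.val_inj]
  exact ⟨fun ⟨_, rfl, hb⟩ => hb, fun hb => ⟨j, rfl, hb⟩⟩

open Set in
theorem stmt_10_general {ι ρ : Type} (m : ℕ)
    (P : Fin m → Finset ι) (px py dp : ι → ℝ)
    (hdp : ∀ i : Fin m, ∀ p ∈ P i, 0 < dp p)
    (R : Finset ρ) (xr y1 y2 : ρ → ℝ) (c : Fin m → ρ → ℝ)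
    (φ : Fin m → ι → ℝ × ℝ × ℝ × ℝ)
    (hφ : ∀ i p, φ i p = (2 * ((i : ℕ) : ℝ) + 1 / 2, px p, py p, dp p))
    (v : ρ → Set (ℝ × ℝ × ℝ × ℝ))
    (hv : ∀ r, v r = ⋃ i : Fin m,
      (Icc (2 * ((i : ℕ) : ℝ)) (2 * ((i : ℕ) : ℝ) + 1)) ×ˢ
        (Icc (0 : ℝ) (xr r)) ×ˢ (Icc (y1 r) (y2 r)) ×ˢ (Icc (0 : ℝ) (c i r))) :
    ∀ S ⊆ R,
      ((∀ i : Fin m, ∀ p ∈ P i, ∃ r ∈ S,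
          px p ∈ Icc (0 : ℝ) (xr r) ∧ py p ∈ Icc (y1 r) (y2 r) ∧ dp p ≤ c i r) ↔
        (∀ i : Fin m, ∀ p ∈ P i, φ i p ∈ ⋃ r ∈ S, v r)) := by
  intro S _
  refine forall_congr' fun i => forall₂_congr fun p hp => ?_
  simp only [hφ, hv, mem_iUnion₂, mk_mem_iUnion_Icc_two_mul_prod_iff, mem_prod, exists_prop,
    mem_Icc (a := (0 : ℝ)) (b := c i _), (hdp i p hp).le, true_and]

open Set in
/-- Core correspondence of Lemma 3.3 (heavy instance of PR2C ↦ hyper-4cuboid covering):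
for `m` planar point sets with demands and a common set of rectangles abutting the
y-axis with per-instance capacities, a subset `S` of rectangles covers every point by
a single rectangle of sufficient capacity iff the lifted 4-dimensional points
`φ(i,p) = (2i + 1/2, x_p, y_p, d_p)` are covered by the hyper-4cuboids
`v_r = ⋃_i [2i,2i+1] × [0,x_r] × [y¹_r,y²_r] × [0,c(i,r)]`. -/
theorem stmt_10 {ι ρ : Type} (m : ℕ) (hm : 1 ≤ m)
    (P : Fin m → Finset ι) (px py dp : ι → ℝ)
    (hdp : ∀ i : Fin m, ∀ p ∈ P i, 0 < dp p)
    (R : Finset ρ) (xr y1 y2 : ρ → ℝ) (c : Fin m → ρ → ℝ)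
    (hc : ∀ i : Fin m, ∀ r ∈ R, 0 < c i r)
    (φ : Fin m → ι → ℝ × ℝ × ℝ × ℝ)
    (hφ : ∀ i p, φ i p = (2 * ((i : ℕ) : ℝ) + 1 / 2, px p, py p, dp p))
    (v : ρ → Set (ℝ × ℝ × ℝ × ℝ))
    (hv : ∀ r, v r = ⋃ i : Fin m,
      (Icc (2 * ((i : ℕ) : ℝ)) (2 * ((i : ℕ) : ℝ) + 1)) ×ˢ
        (Icc (0 : ℝ) (xr r)) ×ˢ (Icc (y1 r) (y2 r)) ×ˢ (Icc (0 : ℝ) (c i r))) :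
    ∀ S ⊆ R,
      ((∀ i : Fin m, ∀ p ∈ P i, ∃ r ∈ S,
          px p ∈ Icc (0 : ℝ) (xr r) ∧ py p ∈ Icc (y1 r) (y2 r) ∧ dp p ≤ c i r) ↔
        (∀ i : Fin m, ∀ p ∈ P i, φ i p ∈ ⋃ r ∈ S, v r)) :=
  stmt_10_general m P px py dp hdp R xr y1 y2 c φ hφ v hv
end
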